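/- Let {x_n}, {y_n}, {z_n} be complex sequences indexed by nonzero integers satisfying the trilinear system and parity. Then for every integer n ≥ 2 and every m with 1 ≤ m ≤ n−1, one has (|x_m|² − |z_m|²)·y_n = (|x_{n−m}|² − |z_{n−m}|²)·y_n and (|x_m|² − |y_m|²)·z_n = (|x_{n−m}|² − |y_{n−m}|²)·z_n. -/

import Mathlib

/-!
Each identity uses only the four instances of the system whose indices are built from
`a = m`, `b = n - m` and `a + b = n`. Parity turns the entries with negative index into
conjugates, so `|x_a|²`, `|z_a|²`, ... appear as products `x_a * conj x_a`, and a linear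
combination of the four equations cancels every term except
`(|x_a|² - |z_a|² - |x_b|² + |z_b|²) * y_{a+b}`, respectively the analogous one with `y`, `z`
exchanged.
-/

open ComplexConjugate

def TrilinearSystem (x y z : ℤ → ℂ) : Prop :=
  ∀ n1 n2 : ℤ, n1 ≠ 0 → n2 ≠ 0 → n1 + n2 ≠ 0 →
    x n1 * y n2 - x (n1 + n2) * z n2 + y (n1 + n2) * z (-n1) = 0

def ConjSymmetric (f : ℤ → ℂ) : Prop :=
  ∀ n : ℤ, f (-n) = conj (f n)

namespace TrilinearSystem

variable {x y z : ℤ → ℂ} {a b : ℤ}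

theorem conj_z (h : TrilinearSystem x y z) (hz : ConjSymmetric z)
    (ha : a ≠ 0) (hb : b ≠ 0) (hab : a + b ≠ 0) :
    x a * y b - x (a + b) * z b + y (a + b) * conj (z a) = 0 := by
  simpa only [hz a] using h a b ha hb hab

theorem conj_x (h : TrilinearSystem x y z) (hx : ConjSymmetric x)
    (ha : a ≠ 0) (hb : b ≠ 0) (hab : a + b ≠ 0) :
    conj (x a) * y (a + b) - x b * z (a + b) + y b * z a = 0 := by
  have e := h (-a) (a + b) (neg_ne_zero.mpr ha) hab (by simpa using hb)
  simpa only [hx a, neg_add_cancel_left, neg_neg] using e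

theorem conj_x_y (h : TrilinearSystem x y z) (hx : ConjSymmetric x) (hy : ConjSymmetric y)
    (ha : a ≠ 0) (hb : b ≠ 0) (hab : a + b ≠ 0) :
    conj (x (a + b)) * y a - conj (x b) * z a + conj (y b) * z (a + b) = 0 := by
  have e := h (-(a + b)) a (neg_ne_zero.mpr hab) ha (by simpa using hb)
  rwa [show -(a + b) + a = -b by ring, neg_neg, hx, hx, hy] at e

theorem normSq_sub_z_mul_y (h : TrilinearSystem x y z) (hx : ConjSymmetric x)
    (hz : ConjSymmetric z) (ha : a ≠ 0) (hb : b ≠ 0) (hab : a + b ≠ 0) :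
    ((‖x a‖ ^ 2 - ‖z a‖ ^ 2 : ℝ) : ℂ) * y (a + b)
      = ((‖x b‖ ^ 2 - ‖z b‖ ^ 2 : ℝ) : ℂ) * y (a + b) := by
  have hba : b + a ≠ 0 := by rwa [add_comm]
  have eA := h.conj_z hz ha hb hab
  have eB := h.conj_z hz hb ha hba
  have eF := h.conj_x hx ha hb hab
  have eG := h.conj_x hx hb ha hba
  rw [add_comm b a] at eB eG
  push_cast [Complex.sq_norm]
  simp only [← Complex.mul_conj]
  linear_combination x a * eF - x b * eG - z a * eA + z b * eB

theorem normSq_sub_y_mul_z (h : TrilinearSystem x y z) (hx : ConjSymmetric x)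
    (hy : ConjSymmetric y) (ha : a ≠ 0) (hb : b ≠ 0) (hab : a + b ≠ 0) :
    ((‖x a‖ ^ 2 - ‖y a‖ ^ 2 : ℝ) : ℂ) * z (a + b)
      = ((‖x b‖ ^ 2 - ‖y b‖ ^ 2 : ℝ) : ℂ) * z (a + b) := by
  have hba : b + a ≠ 0 := by rwa [add_comm]
  have eF := h.conj_x hx ha hb hab
  have eG := h.conj_x hx hb ha hba
  have eJ := h.conj_x_y hx hy ha hb hab
  have eK := h.conj_x_y hx hy hb ha hba
  rw [add_comm b a] at eG eK
  push_cast [Complex.sq_norm]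
  simp only [← Complex.mul_conj]
  linear_combination conj (x b) * eF - conj (x a) * eG - y a * eK + y b * eJ

end TrilinearSystem

theorem stmt_7 (x y z : ℤ → ℂ)
    (hsys : ∀ n1 n2 : ℤ, n1 ≠ 0 → n2 ≠ 0 → n1 + n2 ≠ 0 →
      x n1 * y n2 - x (n1 + n2) * z n2 + y (n1 + n2) * z (-n1) = 0)
    (hpar : ∀ n : ℤ, x (-n) = (starRingEnd ℂ) (x n) ∧ y (-n) = (starRingEnd ℂ) (y n) ∧
      z (-n) = (starRingEnd ℂ) (z n)) :
    ∀ n m : ℤ, 2 ≤ n → 1 ≤ m → m ≤ n - 1 →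
      ((‖x m‖ ^ 2 - ‖z m‖ ^ 2 : ℝ) : ℂ) * y n
        = ((‖x (n - m)‖ ^ 2 - ‖z (n - m)‖ ^ 2 : ℝ) : ℂ) * y n ∧
      ((‖x m‖ ^ 2 - ‖y m‖ ^ 2 : ℝ) : ℂ) * z n
        = ((‖x (n - m)‖ ^ 2 - ‖y (n - m)‖ ^ 2 : ℝ) : ℂ) * z n := by
  intro n m hn hm hmn
  have h : TrilinearSystem x y z := hsys
  have hx : ConjSymmetric x := fun k => (hpar k).1
  have hy : ConjSymmetric y := fun k => (hpar k).2.1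
  have hz : ConjSymmetric z := fun k => (hpar k).2.2
  have ha : m ≠ 0 := by omega
  have hb : n - m ≠ 0 := by omega
  have hab : m + (n - m) ≠ 0 := by omega
  have hsum : m + (n - m) = n := by ring
  have hy_eq := h.normSq_sub_z_mul_y hx hz ha hb hab
  have hz_eq := h.normSq_sub_y_mul_z hx hy ha hb hab
  rw [hsum] at hy_eq hz_eq
  exact ⟨hy_eq, hz_eq⟩
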